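/- arXiv:2402.07724 — 3 statements merged into one kernel-verified Lean document; each statement's English description precedes it below -/
import Mathlib

section
/- Let $P : [0,\infty) \to \mathbb{R}$ be differentiable with $P(0) \geq 0$, and suppose there exist continuous functions $b, c : [0,\infty) \to \mathbb{R}$ and a constant $\rho > 0$ such that $P'(t) = -\rho P(t)^2 + b(t)P(t) + c(t)$ for all $t$, with $b$ and $c$ bounded above. If additionally $b$ is bounded below on the set $\{t : P'(t) > 0\}$ and $c$ is bounded on that set, then $P$ is bounded above on $[0,\infty)$. -/
/-- Quadratic-comparison boundedness lemma: if `P' = -ρ P² + b P + c` on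
`[0,∞)` with `ρ > 0`, `P 0 ≥ 0`, `b` and `c` continuous and bounded above,
`b` bounded below and `c` bounded on the set where `P' > 0`,
then `P` is bounded above on `[0,∞)`. -/
theorem riccati_bounded_above (P b c : ℝ → ℝ) (ρ : ℝ) (hρ : 0 < ρ)
    (hP0 : 0 ≤ P 0)
    (hderiv : ∀ t ∈ Set.Ici (0 : ℝ),
      HasDerivAt P (-ρ * (P t) ^ 2 + b t * P t + c t) t)
    (hb_cont : ContinuousOn b (Set.Ici 0))
    (hc_cont : ContinuousOn c (Set.Ici 0))
    (hb_above : ∃ Bb : ℝ, ∀ t ∈ Set.Ici (0 : ℝ), b t ≤ Bb)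
    (hc_above : ∃ Bc : ℝ, ∀ t ∈ Set.Ici (0 : ℝ), c t ≤ Bc)
    (hb_below : ∃ mb : ℝ, ∀ t ∈ Set.Ici (0 : ℝ),
      0 < -ρ * (P t) ^ 2 + b t * P t + c t → mb ≤ b t)
    (hc_bdd : ∃ Mc : ℝ, ∀ t ∈ Set.Ici (0 : ℝ),
      0 < -ρ * (P t) ^ 2 + b t * P t + c t → |c t| ≤ Mc) :
    ∃ K : ℝ, ∀ t ∈ Set.Ici (0 : ℝ), P t ≤ K := by
  obtain ⟨Bb₀, hBb⟩ := hb_above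
  obtain ⟨Bc₀, hBc⟩ := hc_above
  set Bb := max Bb₀ 0 with hBbdef
  set Mc := max Bc₀ 0 with hMcdef
  set K := max (P 0) ((Bb + Mc) / ρ + 1) with hKdef
  refine ⟨K, ?_⟩
  have hBb0 : (0:ℝ) ≤ Bb := le_max_right _ _
  have hMc0 : (0:ℝ) ≤ Mc := le_max_right _ _
  have key : ∀ u ∈ Set.Ici (0 : ℝ), K < P u →
      -ρ * (P u) ^ 2 + b u * P u + c u ≤ 0 := by
    intro u hu hK
    have h1 : b u ≤ Bb := le_trans (hBb u hu) (le_max_left _ _)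
    have h2 : c u ≤ Mc := le_trans (hBc u hu) (le_max_left _ _)
    have hP1 : (Bb + Mc) / ρ + 1 ≤ P u :=
      le_of_lt (lt_of_le_of_lt (le_max_right _ _) hK)
    have hdivnn : 0 ≤ (Bb + Mc) / ρ := by positivity
    have hPge1 : 1 ≤ P u := by linarith
    have hmul : Bb + Mc + ρ ≤ ρ * P u := by
      have := (div_le_iff₀ hρ).mp (by linarith : (Bb + Mc) / ρ ≤ P u - 1)
      linarith
    nlinarith [sq_nonneg (P u), mul_le_mul_of_nonneg_left h1 (le_trans zero_le_one hPge1)]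
  intro t ht
  by_contra hcon
  push_neg at hcon
  set S := (Set.Icc (0:ℝ) t) ∩ (P ⁻¹' Set.Iic K) with hSdef
  have hPcont : ContinuousOn P (Set.Icc 0 t) := fun u hu =>
    ((hderiv u hu.1).continuousAt).continuousWithinAt
  have hScl : IsClosed S :=
    hPcont.preimage_isClosed_of_isClosed isClosed_Icc (isClosed_Iic (a := K))
  have h0S : (0:ℝ) ∈ S := ⟨⟨le_refl 0, ht⟩, Set.mem_preimage.mpr (le_max_left (P 0) _)⟩
  have hSne : S.Nonempty := ⟨0, h0S⟩
  have hSbdd : BddAbove S := ⟨t, fun x hx => hx.1.2⟩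
  set s := sSup S with hsdef
  have hsS : s ∈ S := hScl.csSup_mem hSne hSbdd
  have hs0 : 0 ≤ s := hsS.1.1
  have hst : s ≤ t := hsS.1.2
  have hPsK : P s ≤ K := hsS.2
  have hslt : s < t := lt_of_le_of_ne hst (fun h => absurd (h ▸ hPsK) (not_le.mpr hcon))
  have hgt : ∀ u ∈ Set.Ioc s t, K < P u := by
    intro u hu
    by_contra hle
    push_neg at hle
    have huS : u ∈ S := ⟨⟨le_trans hs0 hu.1.le, hu.2⟩, hle⟩
    exact absurd (le_csSup hSbdd huS) (not_le.mpr hu.1)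
  have hanti : AntitoneOn P (Set.Icc s t) := by
    apply antitoneOn_of_deriv_nonpos (convex_Icc s t)
      (hPcont.mono (Set.Icc_subset_Icc_left hs0))
    · intro x hx
      rw [interior_Icc] at hx
      have hx0 : x ∈ Set.Ici (0:ℝ) := le_trans hs0 hx.1.le
      exact (hderiv x hx0).differentiableAt.differentiableWithinAt
    · intro x hx
      rw [interior_Icc] at hx
      have hx0 : x ∈ Set.Ici (0:ℝ) := le_trans hs0 hx.1.le
      rw [(hderiv x hx0).deriv]
      exact key x hx0 (hgt x ⟨hx.1, hx.2.le⟩)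
  have : P t ≤ P s := hanti ⟨le_refl s, hst⟩ ⟨hst, le_refl t⟩ hst
  exact absurd (le_trans this hPsK) (not_le.mpr hcon)
end

section
/- Consider the healthy bone system $P' = \rho P(1-M) + \tau_s(1-\mu M) - \alpha P$, $C_I' = \alpha P - \delta C_I C_L$, $C_L' = \tau_c M - \gamma_c C_L$, with $M = P + C_I$ and all parameters $\rho, \tau_s, \mu, \alpha, \delta, \tau_c, \gamma_c$ positive and $\rho < \alpha$. Then this system has exactly one equilibrium point $(P^*, C_I^*, C_L^*)$ with all coordinates nonnegative. -/
lemma cubic_exists_unique (a b c d : ℝ) (ha : 0 < a) (hb : 0 < b) (hc : 0 < c) :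
    ∃! L : ℝ, 0 < L ∧ -a*L^3 - b*L^2 + d*L + c = 0 := by
  set f : ℝ → ℝ := fun L => -a*L^3 - b*L^2 + d*L + c with hf
  have hcont : Continuous f := by continuity
  set T : ℝ := max 1 ((|d| + c + 1)/a) with hT
  have hT1 : (1:ℝ) ≤ T := le_max_left _ _
  have hT2 : (|d| + c + 1)/a ≤ T := le_max_right _ _
  have haT : |d| + c + 1 ≤ a * T := by
    rw [div_le_iff₀ ha] at hT2; linarith [hT2]
  have hTpos : 0 < T := lt_of_lt_of_le one_pos hT1
  have hfT : f T < 0 := by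
    have hd : d * T ≤ |d| * T := mul_le_mul_of_nonneg_right (le_abs_self d) hTpos.le
    have h1 : a * T * T^2 ≥ (|d| + c + 1) * T^2 :=
      mul_le_mul_of_nonneg_right haT (sq_nonneg T)
    have h2 : |d| * T^2 ≥ |d| * T :=
      mul_le_mul_of_nonneg_left (by nlinarith) (abs_nonneg d)
    have hTsq : 1 ≤ T^2 := by nlinarith
    simp only [hf]
    nlinarith [mul_le_mul_of_nonneg_left hTsq hc.le]
  have hf0 : f 0 = c := by simp [hf]
  have := intermediate_value_Icc' (le_of_lt hTpos) hcont.continuousOn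
  have h0mem : (0:ℝ) ∈ Set.Icc (f T) (f 0) := ⟨hfT.le, by rw [hf0]; exact hc.le⟩
  obtain ⟨L, hLmem, hLval⟩ := this h0mem
  have hLpos : 0 < L := by
    rcases lt_or_eq_of_le hLmem.1 with h | h
    · exact h
    · exfalso; rw [← h] at hLval; rw [hf0] at hLval; linarith
  refine ⟨L, ⟨hLpos, hLval⟩, ?_⟩
  rintro L' ⟨hL'pos, hL'val⟩
  simp only [hf] at hLval hL'val
  have key : (L' - L) * (a*L*L'*(L+L') + b*L*L' + c) = 0 := by
    linear_combination L' * hLval - L * hL'val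
  have hpos : 0 < a*L*L'*(L+L') + b*L*L' + c := by positivity
  rcases mul_eq_zero.mp key with h | h
  · linarith [sub_eq_zero.mp h]
  · linarith

/-- The healthy bone model with positive parameters and `ρ < α` has exactly one
equilibrium point with all coordinates nonnegative. -/
theorem healthy_bone_unique_nonneg_equilibrium
    (ρ τs μ α δ τc γc : ℝ)
    (hρ : 0 < ρ) (hτs : 0 < τs) (hμ : 0 < μ) (hα : 0 < α) (hδ : 0 < δ)
    (hτc : 0 < τc) (hγc : 0 < γc) (hρα : ρ < α) :
    ∃! x : ℝ × ℝ × ℝ,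
      (0 ≤ x.1 ∧ 0 ≤ x.2.1 ∧ 0 ≤ x.2.2) ∧
      ρ * x.1 * (1 - (x.1 + x.2.1)) + τs * (1 - μ * (x.1 + x.2.1)) - α * x.1 = 0 ∧
      α * x.1 - δ * x.2.1 * x.2.2 = 0 ∧
      τc * (x.1 + x.2.1) - γc * x.2.2 = 0 := by
  have hb : 0 < δ*γc*τc*(α+μ*τs-ρ) := by
    apply mul_pos (by positivity)
    nlinarith [mul_pos hμ hτs]
  obtain ⟨L, ⟨hLpos, hLeq⟩, hLuniq⟩ :=
    cubic_exists_unique (ρ*δ*γc^2) (δ*γc*τc*(α+μ*τs-ρ)) (α*τs*τc^2) (τs*τc*(δ*τc - μ*α*γc))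
      (by positivity) hb (by positivity)
  have hDpos : 0 < τc*(α+δ*L) := by positivity
  refine ⟨(δ*γc*L^2/(τc*(α+δ*L)), α*γc*L/(τc*(α+δ*L)), L),
    ⟨⟨by positivity, by positivity, hLpos.le⟩, ?_, ?_, ?_⟩, ?_⟩
  · -- eq1
    simp only
    field_simp
    linear_combination (α+δ*L) * hLeq
  · simp only; field_simp; ring
  · simp only; field_simp; ring
  · rintro ⟨P, CI, L'⟩ ⟨⟨hPn, hCIn, hL'n⟩, e1, e2, e3⟩
    dsimp only at hPn hCIn hL'n e1 e2 e3
    have hL'pos : 0 < L' := by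
      rcases lt_or_eq_of_le hL'n with h | h
      · exact h
      · exfalso
        rw [← h] at e2 e3
        ring_nf at e2 e3
        have hP0 : P = 0 := by
          rcases mul_eq_zero.mp e2 with h' | h'
          · exact absurd h' hα.ne'
          · exact h'
        rw [hP0] at e3 e1
        have hCI0 : CI = 0 := by
          have h3 : CI * τc = 0 := by linarith
          rcases mul_eq_zero.mp h3 with h' | h'
          · exact h'
          · exact absurd h' hτc.ne'
        rw [hCI0] at e1
        ring_nf at e1
        linarith
    have hD' : (0:ℝ) < τc*(α+δ*L') := by positivity
    have hP : P = δ*γc*L'^2/(τc*(α+δ*L')) := by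
      rw [eq_div_iff hD'.ne']
      linear_combination δ*L'*e3 + τc*e2
    have hCI : CI = α*γc*L'/(τc*(α+δ*L')) := by
      rw [eq_div_iff hD'.ne']
      linear_combination α*e3 - τc*e2
    rw [hP, hCI] at e1
    field_simp at e1
    have hcube : L' = L := by
      refine hLuniq L' ⟨hL'pos, ?_⟩
      have key : (-(ρ*δ*γc^2)*L'^3 - (δ*γc*τc*(α+μ*τs-ρ))*L'^2 +
          (τs*τc*(δ*τc - μ*α*γc))*L' + α*τs*τc^2) * (τc^2*(α+δ*L')^3) = 0 := by
        linear_combination τc^2*(α+δ*L')^2 * e1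
      rcases mul_eq_zero.mp key with h | h
      · exact h
      · exact absurd h (by positivity)
    rw [hcube] at hP hCI
    rw [hP, hCI, hcube]
end

section
/- Consider the FD model with positive parameters and $0 < \mu$. There exists a local solution around $t = 0$ with initial data $(0, P_m(0), P_p(0), 1/\mu + \varepsilon, C_L(0))$, $\varepsilon > 0$ and the other components nonnegative, for which the component $P$ takes strictly negative values for some arbitrarily small $t > 0$. -/
open Set Filter

private lemma hasDerivAt_fst' {E F : Type*} [NormedAddCommGroup E] [NormedSpace ℝ E]
    [NormedAddCommGroup F] [NormedSpace ℝ F] {f : ℝ → E × F} {y : E × F} {t : ℝ}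
    (h : HasDerivAt f y t) : HasDerivAt (fun t => (f t).1) y.1 t :=
  ((ContinuousLinearMap.fst ℝ E F).hasFDerivAt).comp_hasDerivAt t h

private lemma hasDerivAt_snd' {E F : Type*} [NormedAddCommGroup E] [NormedSpace ℝ E]
    [NormedAddCommGroup F] [NormedSpace ℝ F] {f : ℝ → E × F} {y : E × F} {t : ℝ}
    (h : HasDerivAt f y t) : HasDerivAt (fun t => (f t).2) y.2 t :=
  ((ContinuousLinearMap.snd ℝ E F).hasFDerivAt).comp_hasDerivAt t h

/-- Remark 1 of the paper: for the FD model with positive parameters, there is a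
local solution with initial data `(0, P_m(0), P_p(0), 1/μ + ε, C_L(0))` whose
component `P` takes strictly negative values for arbitrarily small `t > 0`. -/
theorem FD_negative_solution_exists
    (ρ ρm τs τm μ α δ δm τc γc ε Pm0 Pp0 CL0 : ℝ)
    (hρ : 0 < ρ) (hρm : 0 < ρm) (hτs : 0 < τs) (hτm : 0 < τm) (hμ : 0 < μ)
    (hα : 0 < α) (hδ : 0 < δ) (hδm : 0 < δm) (hτc : 0 < τc) (hγc : 0 < γc)
    (hε : 0 < ε) (hPm0 : 0 ≤ Pm0) (hPp0 : 0 ≤ Pp0) (hCL0 : 0 ≤ CL0) :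
    ∃ T > (0 : ℝ), ∃ P Pm Pp CI CL : ℝ → ℝ,
      P 0 = 0 ∧ Pm 0 = Pm0 ∧ Pp 0 = Pp0 ∧ CI 0 = 1 / μ + ε ∧ CL 0 = CL0 ∧
      (∀ t ∈ Set.Icc (0 : ℝ) T,
        HasDerivAt P (ρ * P t * (1 - (P t + Pm t + Pp t + CI t))
          + τs * (1 - μ * (P t + Pm t + Pp t + CI t))
          - α * P t - δm * P t * Pm t) t ∧
        HasDerivAt Pm (ρm * Pm t * (1 - (P t + Pm t + Pp t + CI t))
          + τm * (1 - μ * (P t + Pm t + Pp t + CI t))) t ∧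
        HasDerivAt Pp (ρm * Pp t * (1 - (P t + Pm t + Pp t + CI t))
          + δm * P t * Pm t) t ∧
        HasDerivAt CI (α * P t - δ * CI t * CL t) t ∧
        HasDerivAt CL (τc * (P t + Pm t + Pp t + CI t) - γc * CL t) t) ∧
      (∀ η > (0 : ℝ), ∃ t : ℝ, 0 < t ∧ t ≤ min η T ∧ P t < 0) := by
  -- the vector field on ℝ⁵
  set v : ℝ × ℝ × ℝ × ℝ × ℝ → ℝ × ℝ × ℝ × ℝ × ℝ := fun x =>
    (ρ * x.1 * (1 - (x.1 + x.2.1 + x.2.2.1 + x.2.2.2.1))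
        + τs * (1 - μ * (x.1 + x.2.1 + x.2.2.1 + x.2.2.2.1))
        - α * x.1 - δm * x.1 * x.2.1,
     ρm * x.2.1 * (1 - (x.1 + x.2.1 + x.2.2.1 + x.2.2.2.1))
        + τm * (1 - μ * (x.1 + x.2.1 + x.2.2.1 + x.2.2.2.1)),
     ρm * x.2.2.1 * (1 - (x.1 + x.2.1 + x.2.2.1 + x.2.2.2.1)) + δm * x.1 * x.2.1,
     α * x.1 - δ * x.2.2.2.1 * x.2.2.2.2,
     τc * (x.1 + x.2.1 + x.2.2.1 + x.2.2.2.1) - γc * x.2.2.2.2) with hv_def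
  have hv : ContDiff ℝ 1 v := by rw [hv_def]; fun_prop
  set x₀ : ℝ × ℝ × ℝ × ℝ × ℝ := (0, Pm0, Pp0, 1 / μ + ε, CL0) with hx₀
  obtain ⟨f, hf0, ε', hε', hf⟩ :=
    ContDiffAt.exists_forall_mem_closedBall_exists_eq_forall_mem_Ioo_hasDerivAt₀ (x₀ := x₀) hv.contDiffAt (0 : ℝ)
  set T : ℝ := ε' / 2 with hT_def
  have hT : 0 < T := by positivity
  refine ⟨T, hT, fun t => (f t).1, fun t => (f t).2.1, fun t => (f t).2.2.1,
    fun t => (f t).2.2.2.1, fun t => (f t).2.2.2.2, by simp [hf0, hx₀], by simp [hf0, hx₀],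
    by simp [hf0, hx₀], by simp [hf0, hx₀], by simp [hf0, hx₀], ?_, ?_⟩
  · intro t ht
    have hmem : t ∈ Ioo (0 - ε') (0 + ε') := by
      constructor <;> simp only [zero_sub, zero_add]
      · linarith [ht.1]
      · have := ht.2; rw [hT_def] at this; linarith
    have h := hf t hmem
    exact ⟨hasDerivAt_fst' h, hasDerivAt_fst' (hasDerivAt_snd' h),
      hasDerivAt_fst' (hasDerivAt_snd' (hasDerivAt_snd' h)),
      hasDerivAt_fst' (hasDerivAt_snd' (hasDerivAt_snd' (hasDerivAt_snd' h))),
      hasDerivAt_snd' (hasDerivAt_snd' (hasDerivAt_snd' (hasDerivAt_snd' h)))⟩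
  · -- the P component has negative derivative at 0
    have h0mem : (0 : ℝ) ∈ Ioo (0 - ε') (0 + ε') := by
      constructor <;> simp only [zero_sub, zero_add] <;> linarith
    have hP0 : HasDerivAt (fun t => (f t).1) (v (f 0)).1 0 :=
      hasDerivAt_fst' (hf 0 h0mem)
    have hD : (v (f 0)).1 < 0 := by
      rw [hf0, hv_def]
      simp only [hx₀]
      have hμ' : μ * (1 / μ) = 1 := by field_simp
      nlinarith [mul_nonneg hμ.le hPm0, mul_nonneg hμ.le hPp0, mul_pos hμ hε,
        mul_pos hτs (mul_pos hμ hε), mul_nonneg hτs.le (mul_nonneg hμ.le hPm0),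
        mul_nonneg hτs.le (mul_nonneg hμ.le hPp0)]
    have hslope : Filter.Tendsto (slope (fun t => (f t).1) 0) (nhdsWithin 0 {(0:ℝ)}ᶜ)
        (nhds ((v (f 0)).1)) := hasDerivAt_iff_tendsto_slope.mp hP0
    have hev : ∀ᶠ t in nhdsWithin 0 {(0:ℝ)}ᶜ, slope (fun t => (f t).1) 0 t < 0 :=
      hslope.eventually (Filter.Tendsto.eventually_lt_const hD tendsto_id)
    have hev' : ∀ᶠ t in nhdsWithin (0:ℝ) (Ioi 0), slope (fun t => (f t).1) 0 t < 0 :=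
      hev.filter_mono (nhdsWithin_mono 0 (fun x hx => ne_of_gt hx))
    intro η hη
    have hmem : Ioo (0:ℝ) (min η T) ∈ nhdsWithin (0:ℝ) (Ioi 0) :=
      Ioo_mem_nhdsGT_of_mem ⟨le_refl 0, lt_min hη hT⟩
    obtain ⟨t, hts, ht⟩ := (hev'.and (eventually_of_mem hmem fun t ht => ht)).exists
    refine ⟨t, ht.1, ht.2.le, ?_⟩
    have : slope (fun t => (f t).1) 0 t = (f t).1 / t := by
      rw [slope_def_field]; rw [hf0]; simp [hx₀, div_eq_div_iff]
    rw [this] at hts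
    have h2 := mul_neg_of_neg_of_pos hts ht.1
    rwa [div_mul_cancel₀ _ (ne_of_gt ht.1)] at h2
end
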